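/- arXiv:2304.10761 — 2 statements merged into one kernel-verified Lean document; each statement's English description precedes it below -/
import Mathlib

section
/- Let r : [0,T] → ℝ be differentiable and positive with r'(t) = (G₁(t)+G₂(t))·r(t)^n for continuous functions G₁, G₂, and suppose v₁, v₂ are differentiable with v₁ + v₂ = (4/3)π r³, v₁'(t) = 4π r(t)^{n+2} G₁(t), and v₂'(t) = 4π r(t)^{n+2} G₂(t). Then the composition f = v₁/(v₁+v₂) satisfies f'(t) = (3G₁(t) - 3(G₁(t)+G₂(t))·f(t)) / r(t)^{1-n}. -/
open Real Set

/-! By the quotient rule, `f' = (v₁' - (v₁' + v₂') f) / (v₁ + v₂)`. Both volume rates carry the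
factor `4π r^{n+2}`, and dividing it by the total volume `(4/3)π r³` leaves `3 / r^{1-n}`. -/

theorem HasDerivAt.div_add_self {𝕜 𝕜' : Type*} [NontriviallyNormedField 𝕜]
    [NontriviallyNormedField 𝕜'] [NormedAlgebra 𝕜 𝕜'] {v₁ v₂ : 𝕜 → 𝕜'} {a₁ a₂ : 𝕜'} {t : 𝕜}
    (h₁ : HasDerivAt v₁ a₁ t) (h₂ : HasDerivAt v₂ a₂ t) (hV : v₁ t + v₂ t ≠ 0) :
    HasDerivAt (fun s => v₁ s / (v₁ s + v₂ s))
      ((a₁ - (a₁ + a₂) * (v₁ t / (v₁ t + v₂ t))) / (v₁ t + v₂ t)) t := by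
  refine (h₁.div (h₁.add h₂) hV).congr_deriv ?_
  rw [Pi.add_apply]
  field_simp

theorem Real.four_mul_pi_rpow_add_two_div {x : ℝ} (hx : 0 < x) (y : ℝ) :
    4 * π * x ^ (y + 2) / ((4 / 3) * π * x ^ 3) = 3 / x ^ (1 - y) := by
  have hsplit : x ^ (y + 2) = x ^ y * x ^ 2 := by
    rw [rpow_add hx, rpow_two]
  have hsub : x ^ (1 - y) = x / x ^ y := by
    rw [rpow_sub hx, rpow_one]
  have hxy : x ^ y ≠ 0 := (rpow_pos_of_pos hx y).ne'
  rw [hsplit, hsub]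
  field_simp

theorem stmt4_general (G₁ G₂ r v₁ v₂ : ℝ → ℝ) (n : ℤ)
    (hrpos : ∀ t : ℝ, 0 < r t)
    (hsum : ∀ t : ℝ, v₁ t + v₂ t = (4/3) * Real.pi * r t ^ 3)
    (hv₁ : ∀ t : ℝ, HasDerivAt v₁ (4 * Real.pi * r t ^ ((n:ℝ) + 2) * G₁ t) t)
    (hv₂ : ∀ t : ℝ, HasDerivAt v₂ (4 * Real.pi * r t ^ ((n:ℝ) + 2) * G₂ t) t)
    (t : ℝ) :
    HasDerivAt (fun s => v₁ s / (v₁ s + v₂ s))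
      ((3 * G₁ t - 3 * (G₁ t + G₂ t) * (v₁ t / (v₁ t + v₂ t))) / r t ^ ((1:ℝ) - n))
      t := by
  have hV : 0 < v₁ t + v₂ t := by
    rw [hsum t]
    have := hrpos t
    positivity
  refine ((hv₁ t).div_add_self (hv₂ t) hV.ne').congr_deriv ?_
  have hratio := four_mul_pi_rpow_add_two_div (hrpos t) n
  rw [← hsum t] at hratio
  calc _ = 4 * π * r t ^ ((n:ℝ) + 2) / (v₁ t + v₂ t) *
        (G₁ t - (G₁ t + G₂ t) * (v₁ t / (v₁ t + v₂ t))) := by ring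
    _ = _ := by rw [hratio]; ring

/-- Derivation of the composition growth law: if `r' = (G₁+G₂) r^n`, the component
volumes satisfy `v₁+v₂ = (4/3)π r³`, `v₁' = 4π r^{n+2} G₁`, `v₂' = 4π r^{n+2} G₂`,
then the composition `f = v₁/(v₁+v₂)` satisfies
`f' = (3G₁ - 3(G₁+G₂) f)/r^{1-n}`. -/
theorem stmt4 (G₁ G₂ r v₁ v₂ : ℝ → ℝ) (n : ℤ) (hn : n ≤ 0)
    (hG₁ : Continuous G₁) (hG₂ : Continuous G₂)
    (hrpos : ∀ t : ℝ, 0 < r t)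
    (hr : ∀ t : ℝ, HasDerivAt r ((G₁ t + G₂ t) * r t ^ (n:ℝ)) t)
    (hsum : ∀ t : ℝ, v₁ t + v₂ t = (4/3) * Real.pi * r t ^ 3)
    (hv₁ : ∀ t : ℝ, HasDerivAt v₁ (4 * Real.pi * r t ^ ((n:ℝ) + 2) * G₁ t) t)
    (hv₂ : ∀ t : ℝ, HasDerivAt v₂ (4 * Real.pi * r t ^ ((n:ℝ) + 2) * G₂ t) t)
    (t : ℝ) :
    HasDerivAt (fun s => v₁ s / (v₁ s + v₂ s))
      ((3 * G₁ t - 3 * (G₁ t + G₂ t) * (v₁ t / (v₁ t + v₂ t))) / r t ^ ((1:ℝ) - n))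
      t :=
  stmt4_general G₁ G₂ r v₁ v₂ n hrpos hsum hv₁ hv₂ t
end

section
/- Let g : [0,T] → ℝ be continuous nonnegative with g(0) > 0, n ≤ 0, and consider two initial radii 0 < a < b with characteristics ξ_a(t) = (a^{1-n} + (1-n)∫_0^t g)^{1/(1-n)} and ξ_b likewise. Then for n < 0 the absolute size difference contracts: t ↦ ξ_b(t) - ξ_a(t) is strictly decreasing on any interval where g > 0 (size focusing), while for n = 0 the difference ξ_b(t) - ξ_a(t) = b - a is constant. -/
open Real Set intervalIntegral

/-! Since `1 - n > 1`, the exponent `q = (1 - n)⁻¹` lies in `(0, 1)`, so `x ↦ x ^ q` has the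
decreasing derivative `q x ^ (q - 1)`. Both characteristics are `(B + x) ^ q` and `(A + x) ^ q`
with `A = a ^ (1 - n) < B = b ^ (1 - n)` and the common, increasing clock
`x = (1 - n) ∫₀ᵗ g`; hence the larger particle grows more slowly and the gap shrinks. -/

lemma strictAntiOn_rpow_add_sub_rpow_add {q A B : ℝ} (hq0 : 0 < q) (hq1 : q < 1)
    (hA : 0 ≤ A) (hAB : A < B) :
    StrictAntiOn (fun x => (B + x) ^ q - (A + x) ^ q) (Ici 0) := by
  apply strictAntiOn_of_deriv_neg (convex_Ici 0)
  · exact ((continuousOn_id.const_add B).rpow_const fun _ _ => Or.inr hq0.le).sub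
      ((continuousOn_id.const_add A).rpow_const fun _ _ => Or.inr hq0.le)
  · intro x hx
    rw [interior_Ici] at hx
    have hAx : 0 < A + x := by linarith [mem_Ioi.mp hx]
    have hBx : 0 < B + x := by linarith
    have hderiv (C : ℝ) (hC : 0 < C + x) :
        HasDerivAt (fun y => (C + y) ^ q) (q * (C + x) ^ (q - 1)) x := by
      simpa using ((hasDerivAt_id x).const_add C).rpow_const (Or.inl hC.ne')
    have hdiff : HasDerivAt (fun y => (B + y) ^ q - (A + y) ^ q)
        (q * (B + x) ^ (q - 1) - q * (A + x) ^ (q - 1)) x :=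
      (hderiv B hBx).sub (hderiv A hAx)
    rw [hdiff.deriv, ← mul_sub]
    have hlt : (B + x) ^ (q - 1) < (A + x) ^ (q - 1) :=
      rpow_lt_rpow_of_neg hAx (by linarith) (by linarith)
    exact mul_neg_of_pos_of_neg hq0 (sub_neg.mpr hlt)

lemma integral_lt_integral_of_pos_on {g : ℝ → ℝ} {a s t : ℝ}
    (has : IntervalIntegrable g MeasureTheory.volume a s)
    (hst_int : IntervalIntegrable g MeasureTheory.volume s t)
    (hpos : ∀ u ∈ Ioo s t, 0 < g u) (hst : s < t) :
    ∫ u in a..s, g u < ∫ u in a..t, g u := by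
  have hsub := integral_interval_sub_left (has.trans hst_int) has
  linarith [intervalIntegral_pos_of_pos_on hst_int hpos hst]

theorem stmt16_general (T : ℝ) (n : ℤ)
    (g : ℝ → ℝ) (hg : ContinuousOn g (Icc 0 T))
    (hgnn : ∀ s ∈ Icc (0:ℝ) T, 0 ≤ g s)
    (a b : ℝ) (ha : 0 < a) (hab : a < b) :
    (n < 0 →
      ∀ s ∈ Icc (0:ℝ) T, ∀ t ∈ Icc (0:ℝ) T, s < t →
        (∀ u ∈ Icc s t, 0 < g u) →
        ((b ^ ((1:ℝ) - n) + ((1:ℝ) - n) * ∫ u in (0:ℝ)..t, g u) ^ (((1:ℝ) - n)⁻¹) -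
            (a ^ ((1:ℝ) - n) + ((1:ℝ) - n) * ∫ u in (0:ℝ)..t, g u) ^ (((1:ℝ) - n)⁻¹))
          <
          ((b ^ ((1:ℝ) - n) + ((1:ℝ) - n) * ∫ u in (0:ℝ)..s, g u) ^ (((1:ℝ) - n)⁻¹) -
            (a ^ ((1:ℝ) - n) + ((1:ℝ) - n) * ∫ u in (0:ℝ)..s, g u) ^ (((1:ℝ) - n)⁻¹))) ∧
    (n = 0 →
      ∀ t ∈ Icc (0:ℝ) T,
        (b ^ ((1:ℝ) - n) + ((1:ℝ) - n) * ∫ u in (0:ℝ)..t, g u) ^ (((1:ℝ) - n)⁻¹) -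
          (a ^ ((1:ℝ) - n) + ((1:ℝ) - n) * ∫ u in (0:ℝ)..t, g u) ^ (((1:ℝ) - n)⁻¹)
          = b - a) := by
  refine ⟨fun hneg s hs t ht hst hpos => ?_, fun h0 _ _ => by subst h0; norm_num⟩
  set p : ℝ := 1 - n
  have hp : 1 < p := by
    have : (n : ℝ) < 0 := by exact_mod_cast hneg
    linarith
  have hp0 : 0 < p := by linarith
  have hint {x y : ℝ} (hx : 0 ≤ x) (hxy : x ≤ y) (hy : y ≤ T) :
      IntervalIntegrable g MeasureTheory.volume x y :=
    (hg.mono (by rw [uIcc_of_le hxy]; exact Icc_subset_Icc hx hy)).intervalIntegrable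
  have hIs : 0 ≤ ∫ u in (0:ℝ)..s, g u :=
    integral_nonneg hs.1 fun u hu => hgnn u ⟨hu.1, hu.2.trans hs.2⟩
  have hIst : ∫ u in (0:ℝ)..s, g u < ∫ u in (0:ℝ)..t, g u :=
    integral_lt_integral_of_pos_on (hint le_rfl hs.1 hs.2) (hint hs.1 hst.le ht.2)
      (fun u hu => hpos u (Ioo_subset_Icc_self hu)) hst
  exact strictAntiOn_rpow_add_sub_rpow_add (inv_pos.mpr hp0) (inv_lt_one_of_one_lt₀ hp)
    (rpow_nonneg ha.le p) (rpow_lt_rpow ha.le hab hp0)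
    (mem_Ici.mpr (mul_nonneg hp0.le hIs))
    (mem_Ici.mpr (mul_nonneg hp0.le (hIs.trans hIst.le))) (mul_lt_mul_of_pos_left hIst hp0)

/-- Size focusing: for `n < 0` the difference of the radius characteristics of two
particles with initial radii `0 < a < b` is strictly decreasing on any interval
where the growth rate `g` is positive, while for `n = 0` it is constant. -/
theorem stmt16 (T : ℝ) (hT : 0 < T) (n : ℤ) (hn : n ≤ 0)
    (g : ℝ → ℝ) (hg : ContinuousOn g (Icc 0 T))
    (hgnn : ∀ s ∈ Icc (0:ℝ) T, 0 ≤ g s) (hg0 : 0 < g 0)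
    (a b : ℝ) (ha : 0 < a) (hab : a < b) :
    (n < 0 →
      ∀ s ∈ Icc (0:ℝ) T, ∀ t ∈ Icc (0:ℝ) T, s < t →
        (∀ u ∈ Icc s t, 0 < g u) →
        ((b ^ ((1:ℝ) - n) + ((1:ℝ) - n) * ∫ u in (0:ℝ)..t, g u) ^ (((1:ℝ) - n)⁻¹) -
            (a ^ ((1:ℝ) - n) + ((1:ℝ) - n) * ∫ u in (0:ℝ)..t, g u) ^ (((1:ℝ) - n)⁻¹))
          <
          ((b ^ ((1:ℝ) - n) + ((1:ℝ) - n) * ∫ u in (0:ℝ)..s, g u) ^ (((1:ℝ) - n)⁻¹) -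
            (a ^ ((1:ℝ) - n) + ((1:ℝ) - n) * ∫ u in (0:ℝ)..s, g u) ^ (((1:ℝ) - n)⁻¹))) ∧
    (n = 0 →
      ∀ t ∈ Icc (0:ℝ) T,
        (b ^ ((1:ℝ) - n) + ((1:ℝ) - n) * ∫ u in (0:ℝ)..t, g u) ^ (((1:ℝ) - n)⁻¹) -
          (a ^ ((1:ℝ) - n) + ((1:ℝ) - n) * ∫ u in (0:ℝ)..t, g u) ^ (((1:ℝ) - n)⁻¹)
          = b - a) :=
  stmt16_general T n g hg hgnn a b ha hab
end
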